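/- For every ρ > 0 and every z ∈ ℝ, the function H(ρ,z) = 2·A·z + Σ_{i=1}^r a_i·(z − z_i)·d_i + (ρ²/2)·Σ_{i=1}^r a_i·log((d_i + z − z_i)/(d_i − z + z_i)) is a conjugate function of U(ρ,z) = A·log(ρ²) + Σ_{i=1}^r a_i·(2·d_i − (z − z_i)·log((d_i + z − z_i)/(d_i − z + z_i))), that is: ∂H/∂z (ρ,z) = ρ·∂U/∂ρ (ρ,z) and ∂H/∂ρ (ρ,z) = −ρ·∂U/∂z (ρ,z). -/

import Mathlib

open Finset

/-- The distance `d_i(ρ,z) = (ρ² + (z − z_i)²)^{1/2}`. -/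
noncomputable def dd {r : ℕ} (zs : Fin r → ℝ) (ρ z : ℝ) (i : Fin r) : ℝ :=
  Real.sqrt (ρ ^ 2 + (z - zs i) ^ 2)

/-- The generating function `U(ρ,z)`. -/
noncomputable def genU {r : ℕ} (A : ℝ) (a zs : Fin r → ℝ) (ρ z : ℝ) : ℝ :=
  A * Real.log (ρ ^ 2) +
    ∑ i, a i * (2 * dd zs ρ z i -
      (z - zs i) * Real.log ((dd zs ρ z i + z - zs i) / (dd zs ρ z i - z + zs i)))

/-- The conjugate function `H(ρ,z)`. -/
noncomputable def genH {r : ℕ} (A : ℝ) (a zs : Fin r → ℝ) (ρ z : ℝ) : ℝ :=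
  2 * A * z + ∑ i, a i * (z - zs i) * dd zs ρ z i +
    (ρ ^ 2 / 2) *
      ∑ i, a i * Real.log ((dd zs ρ z i + z - zs i) / (dd zs ρ z i - z + zs i))

/-!
`U` and `H` are `A log ρ²` and `2 A z` plus the same `a_i`-weighted superposition of translates of
one pair of functions of `(ρ, ζ)`, and the equations `H_z = ρ U_ρ`, `H_ρ = -ρ U_z` are linear, so
it suffices to check them for that pair. Since `(d + ζ) / (d - ζ) = ((d + ζ) / ρ)²` with
`d = √(ρ² + ζ²)`, the logarithm equals `2 arsinh (ζ / ρ)`, whose partial derivatives are `1 / d`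
and `-ζ / (ρ d)`; then both sides of the two equations come out as `2 d` and `2 ρ arsinh (ζ / ρ)`.
-/

open Real

/-- The `i`-th summands of `U` and `H` in the offset `ζ = z - z_i`, with
`log ((d_i + ζ) / (d_i - ζ))` written as `2 * arsinh (ζ / ρ)` (`log_div_eq_two_mul_arsinh`). -/
noncomputable def sourceU (ρ ζ : ℝ) : ℝ := 2 * √(ρ ^ 2 + ζ ^ 2) - 2 * ζ * arsinh (ζ / ρ)

noncomputable def sourceH (ρ ζ : ℝ) : ℝ := ζ * √(ρ ^ 2 + ζ ^ 2) + ρ ^ 2 * arsinh (ζ / ρ)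

section Source

variable {ρ : ℝ} (ζ : ℝ)

lemma sqrt_one_add_div_sq (hρ : 0 < ρ) : √(1 + (ζ / ρ) ^ 2) = √(ρ ^ 2 + ζ ^ 2) / ρ := by
  rw [show 1 + (ζ / ρ) ^ 2 = (ρ ^ 2 + ζ ^ 2) / ρ ^ 2 by field_simp,
    Real.sqrt_div' _ (sq_nonneg ρ), Real.sqrt_sq hρ.le]

lemma abs_lt_sqrt_sq_add_sq (hρ : 0 < ρ) : |ζ| < √(ρ ^ 2 + ζ ^ 2) := by
  rw [← Real.sqrt_sq_eq_abs]
  exact Real.sqrt_lt_sqrt (sq_nonneg _) (by nlinarith)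

lemma log_div_eq_two_mul_arsinh (hρ : 0 < ρ) :
    log ((√(ρ ^ 2 + ζ ^ 2) + ζ) / (√(ρ ^ 2 + ζ ^ 2) - ζ)) = 2 * arsinh (ζ / ρ) := by
  have hζ := abs_lt_sqrt_sq_add_sq ζ hρ
  have hplus : 0 < √(ρ ^ 2 + ζ ^ 2) + ζ := by linarith [neg_abs_le ζ]
  have hminus : 0 < √(ρ ^ 2 + ζ ^ 2) - ζ := by linarith [le_abs_self ζ]
  have hsq : √(ρ ^ 2 + ζ ^ 2) ^ 2 = ρ ^ 2 + ζ ^ 2 := Real.sq_sqrt (by positivity)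
  have hne : ζ / ρ + √(ρ ^ 2 + ζ ^ 2) / ρ ≠ 0 := by
    rw [← add_div]
    exact (div_pos (by linarith) hρ).ne'
  rw [arsinh, sqrt_one_add_div_sq ζ hρ, two_mul, ← log_mul hne hne]
  congr 1
  field_simp
  linear_combination (-(√(ρ ^ 2 + ζ ^ 2) + ζ)) * hsq

lemma hasDerivAt_sqrt_sq_add_sq_radial (hρ : 0 < ρ) :
    HasDerivAt (fun s => √(s ^ 2 + ζ ^ 2)) (ρ / √(ρ ^ 2 + ζ ^ 2)) ρ := by
  refine (((hasDerivAt_pow 2 ρ).add_const (ζ ^ 2)).sqrt (by positivity)).congr_deriv ?_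
  field_simp
  norm_num

lemma hasDerivAt_sqrt_sq_add_sq_axial (hρ : 0 < ρ) :
    HasDerivAt (fun t => √(ρ ^ 2 + t ^ 2)) (ζ / √(ρ ^ 2 + ζ ^ 2)) ζ := by
  refine (((hasDerivAt_pow 2 ζ).const_add (ρ ^ 2)).sqrt (by positivity)).congr_deriv ?_
  field_simp
  norm_num

lemma hasDerivAt_arsinh_div_radial (hρ : 0 < ρ) :
    HasDerivAt (fun s => arsinh (ζ / s)) (-ζ / (ρ * √(ρ ^ 2 + ζ ^ 2))) ρ := by
  refine (((hasDerivAt_const ρ ζ).fun_div (hasDerivAt_id' ρ) hρ.ne').arsinh).congr_deriv ?_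
  rw [sqrt_one_add_div_sq ζ hρ, smul_eq_mul]
  have : 0 < √(ρ ^ 2 + ζ ^ 2) := by positivity
  field_simp
  ring

lemma hasDerivAt_arsinh_div_axial (hρ : 0 < ρ) :
    HasDerivAt (fun t => arsinh (t / ρ)) (1 / √(ρ ^ 2 + ζ ^ 2)) ζ := by
  refine ((hasDerivAt_id' ζ).div_const ρ).arsinh.congr_deriv ?_
  rw [sqrt_one_add_div_sq ζ hρ, smul_eq_mul]
  have : 0 < √(ρ ^ 2 + ζ ^ 2) := by positivity
  field_simp

lemma hasDerivAt_sourceU_radial (hρ : 0 < ρ) :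
    HasDerivAt (sourceU · ζ) (2 * √(ρ ^ 2 + ζ ^ 2) / ρ) ρ := by
  refine (((hasDerivAt_sqrt_sq_add_sq_radial ζ hρ).const_mul 2).sub
    ((hasDerivAt_arsinh_div_radial ζ hρ).const_mul (2 * ζ))).congr_deriv ?_
  have hsq : √(ρ ^ 2 + ζ ^ 2) ^ 2 = ρ ^ 2 + ζ ^ 2 := Real.sq_sqrt (by positivity)
  have : 0 < √(ρ ^ 2 + ζ ^ 2) := by positivity
  field_simp
  linear_combination -hsq

lemma hasDerivAt_sourceU_axial (hρ : 0 < ρ) :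
    HasDerivAt (sourceU ρ ·) (-2 * arsinh (ζ / ρ)) ζ := by
  refine (((hasDerivAt_sqrt_sq_add_sq_axial ζ hρ).const_mul 2).sub
    (((hasDerivAt_id' ζ).const_mul 2).mul (hasDerivAt_arsinh_div_axial ζ hρ))).congr_deriv ?_
  have : 0 < √(ρ ^ 2 + ζ ^ 2) := by positivity
  field_simp
  ring

lemma hasDerivAt_sourceH_radial (hρ : 0 < ρ) :
    HasDerivAt (sourceH · ζ) (2 * ρ * arsinh (ζ / ρ)) ρ := by
  refine (((hasDerivAt_sqrt_sq_add_sq_radial ζ hρ).const_mul ζ).add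
    ((hasDerivAt_pow 2 ρ).mul (hasDerivAt_arsinh_div_radial ζ hρ))).congr_deriv ?_
  have : 0 < √(ρ ^ 2 + ζ ^ 2) := by positivity
  field_simp
  ring

lemma hasDerivAt_sourceH_axial (hρ : 0 < ρ) :
    HasDerivAt (sourceH ρ ·) (2 * √(ρ ^ 2 + ζ ^ 2)) ζ := by
  refine (((hasDerivAt_id' ζ).mul (hasDerivAt_sqrt_sq_add_sq_axial ζ hρ)).add
    ((hasDerivAt_arsinh_div_axial ζ hρ).const_mul (ρ ^ 2))).congr_deriv ?_
  have hsq : √(ρ ^ 2 + ζ ^ 2) ^ 2 = ρ ^ 2 + ζ ^ 2 := Real.sq_sqrt (by positivity)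
  have : 0 < √(ρ ^ 2 + ζ ^ 2) := by positivity
  field_simp
  linear_combination -hsq

end Source

section Superposition

variable {r : ℕ} (A : ℝ) (a zs : Fin r → ℝ) {ρ : ℝ} (z : ℝ)

lemma genU_eq_sum_sourceU (hρ : 0 < ρ) :
    genU A a zs ρ z = A * log (ρ ^ 2) + ∑ i, a i * sourceU ρ (z - zs i) := by
  simp only [genU, sourceU, dd, add_sub_assoc, sub_add]
  congr 1
  refine Finset.sum_congr rfl fun i _ => ?_
  rw [log_div_eq_two_mul_arsinh _ hρ]
  ring

lemma genH_eq_sum_sourceH (hρ : 0 < ρ) :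
    genH A a zs ρ z = 2 * A * z + ∑ i, a i * sourceH ρ (z - zs i) := by
  simp only [genH, sourceH, dd, add_sub_assoc, sub_add, mul_sum, add_assoc, ← sum_add_distrib]
  congr 1
  refine Finset.sum_congr rfl fun i _ => ?_
  rw [log_div_eq_two_mul_arsinh _ hρ]
  ring

lemma hasDerivAt_genU_radial (hρ : 0 < ρ) :
    HasDerivAt (genU A a zs · z) (2 * A / ρ + ∑ i, a i * (2 * dd zs ρ z i / ρ)) ρ := by
  have hlog : HasDerivAt (fun s => A * log (s ^ 2)) (2 * A / ρ) ρ := by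
    refine (((hasDerivAt_pow 2 ρ).log (by positivity)).const_mul A).congr_deriv ?_
    field_simp
    ring
  refine (hlog.add (HasDerivAt.fun_sum fun i _ =>
    (hasDerivAt_sourceU_radial (z - zs i) hρ).const_mul (a i))).congr_of_eventuallyEq ?_
  filter_upwards [eventually_gt_nhds hρ] with s hs using genU_eq_sum_sourceU A a zs z hs

lemma hasDerivAt_genU_axial (hρ : 0 < ρ) :
    HasDerivAt (genU A a zs ρ ·) (∑ i, a i * (-2 * arsinh ((z - zs i) / ρ))) z := by
  simp only [genU_eq_sum_sourceU A a zs _ hρ]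
  refine ((hasDerivAt_const z _).add (HasDerivAt.fun_sum fun i _ =>
    ((hasDerivAt_sourceU_axial (z - zs i) hρ).comp_sub_const z (zs i)).const_mul
      (a i))).congr_deriv (zero_add _)

lemma hasDerivAt_genH_radial (hρ : 0 < ρ) :
    HasDerivAt (genH A a zs · z) (∑ i, a i * (2 * ρ * arsinh ((z - zs i) / ρ))) ρ := by
  refine ((hasDerivAt_const ρ (2 * A * z)).add (HasDerivAt.fun_sum fun i _ =>
    (hasDerivAt_sourceH_radial (z - zs i) hρ).const_mul (a i))).congr_deriv (zero_add _)
    |>.congr_of_eventuallyEq ?_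
  filter_upwards [eventually_gt_nhds hρ] with s hs using genH_eq_sum_sourceH A a zs z hs

lemma hasDerivAt_genH_axial (hρ : 0 < ρ) :
    HasDerivAt (genH A a zs ρ ·) (2 * A + ∑ i, a i * (2 * dd zs ρ z i)) z := by
  simp only [genH_eq_sum_sourceH A a zs _ hρ]
  refine (((hasDerivAt_id' z).const_mul (2 * A)).congr_deriv (mul_one _)).add
    (HasDerivAt.fun_sum fun i _ =>
      ((hasDerivAt_sourceH_axial (z - zs i) hρ).comp_sub_const z (zs i)).const_mul (a i))

end Superposition

theorem statement2_general {r : ℕ} (A : ℝ)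
    (zs a : Fin r → ℝ)
    (ρ z : ℝ) (hρ : 0 < ρ) :
    -- H_z = ρ U_ρ
    HasDerivAt (fun t => genH A a zs ρ t)
      (ρ * deriv (fun s => genU A a zs s z) ρ) z ∧
    -- H_ρ = −ρ U_z
    HasDerivAt (fun t => genH A a zs t z)
      (-ρ * deriv (fun s => genU A a zs ρ s) z) ρ := by
  rw [(hasDerivAt_genU_radial A a zs z hρ).deriv, (hasDerivAt_genU_axial A a zs z hρ).deriv]
  refine ⟨(hasDerivAt_genH_axial A a zs z hρ).congr_deriv ?_,
    (hasDerivAt_genH_radial A a zs z hρ).congr_deriv ?_⟩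
  · rw [mul_add, mul_sum]
    field_simp
  · rw [mul_sum]
    refine Finset.sum_congr rfl fun i _ => ?_
    ring

theorem statement2 {r : ℕ} (hr : 1 ≤ r) (A : ℝ) (hA : 0 < A)
    (zs a : Fin r → ℝ)
    (hz : ∀ i j : Fin r, i < j → zs i < zs j)
    (ha : ∀ i, 0 < a i) (hsum : ∑ i, a i = 1)
    (ρ z : ℝ) (hρ : 0 < ρ) :
    -- H_z = ρ U_ρ
    HasDerivAt (fun t => genH A a zs ρ t)
      (ρ * deriv (fun s => genU A a zs s z) ρ) z ∧
    -- H_ρ = −ρ U_z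
    HasDerivAt (fun t => genH A a zs t z)
      (-ρ * deriv (fun s => genU A a zs ρ s) z) ρ :=
  statement2_general A zs a ρ z hρ
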